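/- For every positive integer r there exist two graphs G_1 and G_2 with the same degree sequence d such that γ(G_1) = sl(d) = r + 1 while γ(G_2) = 1 + r(r+1)/2. Concretely, G_1 is the disjoint union of r + 1 stars K_{1,r}, and G_2 is the disjoint union of a complete graph K_{r+1} and r(r+1)/2 copies of K_2. -/

import Mathlib

open Finset

/-- The degree of a vertex in a simple graph. -/
noncomputable def deg {V : Type*} (G : SimpleGraph V) (v : V) : ℕ := Nat.card {u // G.Adj v u}

/-- `D` is a dominating set of `G`. -/
def DomSet {V : Type*} (G : SimpleGraph V) (D : Set V) : Prop := ∀ v ∉ D, ∃ u ∈ D, G.Adj u v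

/-- `S` is an independent set of `G`. -/
def IndepSet {V : Type*} (G : SimpleGraph V) (S : Set V) : Prop :=
  ∀ u ∈ S, ∀ v ∈ S, ¬ G.Adj u v

/-- The domination number of `G`. -/
noncomputable def domNum {V : Type*} [Fintype V] (G : SimpleGraph V) : ℕ :=
  sInf {k | ∃ D : Finset V, D.card = k ∧ DomSet G ↑D}

/-- The independence number of `G`. -/
noncomputable def indepNum {V : Type*} [Fintype V] (G : SimpleGraph V) : ℕ :=
  sSup {k | ∃ S : Finset V, S.card = k ∧ IndepSet G ↑S}

/-- Sum of the first `k` entries `d_1 + ... + d_k` (0-indexed: indices `< k`). -/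
def psum {n : ℕ} (d : Fin n → ℕ) (k : ℕ) : ℕ := ∑ i : Fin n, if (i : ℕ) < k then d i else 0

/-- Sum of the remaining entries `d_{k+1} + ... + d_n` (0-indexed: indices `≥ k`). -/
def ssum {n : ℕ} (d : Fin n → ℕ) (k : ℕ) : ℕ := ∑ i : Fin n, if k ≤ (i : ℕ) then d i else 0

/-- Slater's bound `sl(d) = min{k ∈ [n] : d_1 + ... + d_k ≥ n - k}`. -/
noncomputable def slater (n : ℕ) (d : Fin n → ℕ) : ℕ := sInf {k | 1 ≤ k ∧ k ≤ n ∧ n - k ≤ psum d k}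

/-- The annihilation number `a(d) = n - min{k ∈ [n] : Σ_{i≤k} d_i ≥ Σ_{i>k} d_i}`. -/
noncomputable def annih (n : ℕ) (d : Fin n → ℕ) : ℕ := n - sInf {k | 1 ≤ k ∧ k ≤ n ∧ ssum d k ≤ psum d k}

/-- The number of entries of `d` equal to `j`. -/
def nCount {n : ℕ} (d : Fin n → ℕ) (j : ℕ) : ℕ := (Finset.univ.filter fun i => d i = j).card

/-- The number of entries of `d` that are at least `2`. -/
def nGe2 {n : ℕ} (d : Fin n → ℕ) : ℕ := (Finset.univ.filter fun i => 2 ≤ d i).card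

/-- `F` is a forest realization of the degree sequence `d`. -/
def IsForestReal {n : ℕ} (d : Fin n → ℕ) (F : SimpleGraph (Fin n)) : Prop :=
  F.IsAcyclic ∧ ∀ i, deg F i = d i

/-- The minimum domination number over all forest realizations of `d`. -/
noncomputable def gammaFmin {n : ℕ} (d : Fin n → ℕ) : ℕ :=
  sInf {m | ∃ F : SimpleGraph (Fin n), IsForestReal d F ∧ domNum F = m}

/-- The maximum independence number over all forest realizations of `d`. -/
noncomputable def alphaFmax {n : ℕ} (d : Fin n → ℕ) : ℕ :=
  sSup {m | ∃ F : SimpleGraph (Fin n), IsForestReal d F ∧ indepNum F = m}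

/-!
Every component of either graph has a vertex adjacent to all the others (a star centre, a vertex
of the clique, an end of an edge), so a dominating set must meet every component and the set of
these vertices suffices: `γ` is the number of components, `r + 1` for `G₁` and `1 + r(r+1)/2` for
`G₂`. Slater's bound is `r + 1`: the first `k ≤ r` degrees sum to `k r < n - k`, and the first `r + 1`
sum to `r(r+1) = n - (r + 1)`.
-/

open SimpleGraph

lemma Nat.card_subtype_sum_of_not_inr {α β : Type*} {p : α ⊕ β → Prop}
    (h : ∀ b, ¬ p (.inr b)) :
    Nat.card {c // p c} = Nat.card {a // p (.inl a)} :=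
  have : IsEmpty {b // p (.inr b)} := ⟨fun b => h b.1 b.2⟩
  Nat.card_congr (Equiv.subtypeSum.trans (Equiv.sumEmpty _ _))

lemma Nat.card_subtype_sum_of_not_inl {α β : Type*} {p : α ⊕ β → Prop}
    (h : ∀ a, ¬ p (.inl a)) :
    Nat.card {c // p c} = Nat.card {b // p (.inr b)} :=
  have : IsEmpty {a // p (.inl a)} := ⟨fun a => h a.1 a.2⟩
  Nat.card_congr (Equiv.subtypeSum.trans (Equiv.emptySum _ _))

lemma Nat.card_subtype_fst_eq {α β : Type*} (a : α) :
    Nat.card {x : α × β // x.1 = a} = Nat.card β :=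
  Nat.card_congr
    { toFun x := x.1.2
      invFun b := ⟨(a, b), rfl⟩
      left_inv := by rintro ⟨⟨_, b⟩, rfl⟩; rfl
      right_inv _ := rfl }

section Degree

variable {V W : Type*}

lemma deg_eq_degree (G : SimpleGraph V) (v : V) [Fintype (G.neighborSet v)] :
    deg G v = G.degree v := by
  rw [deg, ← card_neighborSet_eq_degree, ← Nat.card_eq_fintype_card]
  rfl

lemma SimpleGraph.Iso.deg_apply {G : SimpleGraph V} {H : SimpleGraph W} (φ : G ≃g H) (v : V) :
    deg H (φ v) = deg G v :=
  (Nat.card_congr (φ.toEquiv.subtypeEquiv fun _ => φ.map_adj_iff.symm)).symm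

lemma deg_sum_inl (G : SimpleGraph V) (H : SimpleGraph W) (v : V) :
    deg (G ⊕g H) (.inl v) = deg G v :=
  Nat.card_subtype_sum_of_not_inr fun _ => not_adj_sum_inl_inr _ _

lemma deg_sum_inr (G : SimpleGraph V) (H : SimpleGraph W) (w : W) :
    deg (G ⊕g H) (.inr w) = deg H w :=
  Nat.card_subtype_sum_of_not_inl fun _ h => not_adj_sum_inl_inr _ _ h.symm

end Degree

section Domination

variable {V W : Type*} {G : SimpleGraph V} {H : SimpleGraph W}

lemma DomSet.map_iso (φ : G ≃g H) {D : Finset V} (hD : DomSet G D) :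
    DomSet H ↑(D.map φ.toEquiv.toEmbedding) := by
  intro w hw
  obtain ⟨v, rfl⟩ := φ.surjective w
  obtain ⟨u, hu, huv⟩ := hD v fun hv => hw (by simpa using hv)
  exact ⟨φ u, by simpa using hu, φ.map_adj_iff.2 huv⟩

lemma domNum_congr [Fintype V] [Fintype W] (φ : G ≃g H) : domNum G = domNum H := by
  unfold domNum
  congr 1
  ext k
  constructor
  · rintro ⟨D, rfl, hD⟩
    exact ⟨_, card_map _, DomSet.map_iso φ hD⟩
  · rintro ⟨D, rfl, hD⟩
    exact ⟨_, card_map _, DomSet.map_iso φ.symm hD⟩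

lemma domNum_eq_card_of_centers [Fintype V] {ι : Type*} [Fintype ι] (G : SimpleGraph V)
    (c : V → ι) (ctr : ι → V) (hc : ∀ u v, G.Adj u v → c u = c v)
    (hctr : ∀ j, c (ctr j) = j)
    (hadj : ∀ v, v ≠ ctr (c v) → G.Adj (ctr (c v)) v) :
    domNum G = Fintype.card ι := by
  classical
  refine IsLeast.csInf_eq ⟨⟨univ.image ctr, ?_, ?_⟩, ?_⟩
  · exact (card_image_of_injective _ (Function.LeftInverse.injective hctr)).trans card_univ
  · intro v hv
    refine ⟨ctr (c v), by simp, hadj v fun h => hv ?_⟩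
    rw [h]
    simp
  · rintro _ ⟨D, rfl, hD⟩
    have hcover : univ ⊆ D.image c := by
      intro j _
      by_cases hj : ctr j ∈ D
      · exact mem_image.2 ⟨ctr j, hj, hctr j⟩
      · obtain ⟨u, hu, hadj⟩ := hD (ctr j) hj
        exact mem_image.2 ⟨u, hu, (hc _ _ hadj).trans (hctr j)⟩
    exact (card_le_card hcover).trans card_image_le

end Domination

def starForest {α β : Type*} (f : β → α) : SimpleGraph (α ⊕ β) where
  Adj
    | .inl a, .inr b | .inr b, .inl a => f b = a
    | _, _ => False
  symm.symm
    | .inl _, .inr _ | .inr _, .inl _ | .inl _, .inl _ | .inr _, .inr _ => id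
  loopless.irrefl
    | .inl _ | .inr _ => id

section StarForest

variable {α β : Type*} (f : β → α)

lemma deg_starForest_inl (a : α) : deg (starForest f) (.inl a) = Nat.card {b // f b = a} :=
  Nat.card_subtype_sum_of_not_inl fun _ h => h

lemma deg_starForest_inr (b : β) : deg (starForest f) (.inr b) = 1 := by
  rw [deg, Nat.card_subtype_sum_of_not_inr fun _ h => h]
  exact Nat.card_unique (α := {a // f b = a})

lemma domNum_starForest [Fintype α] [Fintype β] : domNum (starForest f) = Fintype.card α :=
  domNum_eq_card_of_centers _ (Sum.elim id f) .inl
    (by rintro (a | b) (a | b) h <;> simp_all [starForest]) (fun _ => rfl)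
    (by rintro (a | b) h
        · exact (h rfl).elim
        · rfl)

end StarForest

lemma deg_top_sum_bot_boxProd_top_inl {α β γ : Type*} [Fintype α] [DecidableEq α] (a : α) :
    deg ((⊤ : SimpleGraph α) ⊕g ((⊥ : SimpleGraph β) □ (⊤ : SimpleGraph γ))) (.inl a) =
      Fintype.card α - 1 := by
  rw [deg_sum_inl, deg_eq_degree, ← complete_graph_degree]

lemma deg_top_sum_bot_boxProd_top_inr {α β γ : Type*} [Fintype β] [Fintype γ] [DecidableEq γ]
    (x : β × γ) :
    deg ((⊤ : SimpleGraph α) ⊕g ((⊥ : SimpleGraph β) □ (⊤ : SimpleGraph γ))) (.inr x) =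
      Fintype.card γ - 1 := by
  rw [deg_sum_inr, deg_eq_degree, degree_boxProd, bot_degree, complete_graph_degree, zero_add]

lemma domNum_top_sum_bot_boxProd_top {α β γ : Type*} [Fintype α] [Fintype β] [Fintype γ]
    [Inhabited α] [Inhabited γ] :
    domNum ((⊤ : SimpleGraph α) ⊕g ((⊥ : SimpleGraph β) □ (⊤ : SimpleGraph γ))) =
      Fintype.card β + 1 := by
  rw [← Fintype.card_option]
  refine domNum_eq_card_of_centers _ (Sum.elim (fun _ => none) (some ·.1))
    (Option.elim · (.inl default) (fun b => .inr (b, default))) ?_ (by rintro (_ | _) <;> rfl) ?_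
  · rintro (a | ⟨b, x⟩) (a | ⟨b', x'⟩) h <;> simp_all
  · rintro (a | ⟨b, x⟩) h <;> simp_all [eq_comm]

lemma exists_fin_relabel {α β : Type*} [Fintype α] [Fintype β] (H : SimpleGraph (α ⊕ β))
    {n p q : ℕ} (hn : Fintype.card α + Fintype.card β = n) (hp : ∀ a, deg H (.inl a) = p)
    (hq : ∀ b, deg H (.inr b) = q) :
    ∃ G : SimpleGraph (Fin n),
      (∀ i, deg G i = if (i : ℕ) < Fintype.card α then p else q) ∧ domNum G = domNum H := by
  let e : α ⊕ β ≃ Fin n :=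
    (Equiv.sumCongr (Fintype.equivFin α) (Fintype.equivFin β)).trans
      (finSumFinEquiv.trans (finCongr hn))
  refine ⟨H.comap e.symm, fun i => ?_, domNum_congr (Iso.comap e.symm H)⟩
  rw [← (Iso.comap e.symm H).deg_apply, Iso.comap_apply]
  obtain ⟨a | b, rfl⟩ := e.surjective i <;> simp [e, hp, hq]

lemma psum_eq_mul {n k c : ℕ} (d : Fin n → ℕ) (hk : k ≤ n)
    (hd : ∀ i : Fin n, (i : ℕ) < k → d i = c) :
    psum d k = k * c := by
  calc psum d k = ∑ i ∈ univ.filter fun i : Fin n => (i : ℕ) < k, c := by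
        rw [psum, sum_filter]
        exact sum_congr rfl fun i _ => by split_ifs with h; exacts [hd i h, rfl]
    _ = k * c := by rw [sum_const, Fin.card_filter_val_lt, min_eq_right hk, smul_eq_mul]

lemma slater_starForest_degrees (r : ℕ) :
    slater ((r + 1) ^ 2) (fun i => if (i : ℕ) < r + 1 then r else 1) = r + 1 := by
  have hpsum : ∀ k ≤ r + 1,
      psum (fun i : Fin ((r + 1) ^ 2) => if (i : ℕ) < r + 1 then r else 1) k = k * r :=
    fun k hk =>
    psum_eq_mul _ (hk.trans (Nat.le_self_pow two_ne_zero _)) fun i hi => if_pos (by omega)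
  have hsq : (r + 1) ^ 2 = r * r + 2 * r + 1 := by ring
  refine IsLeast.csInf_eq ⟨⟨by omega, Nat.le_self_pow two_ne_zero _, ?_⟩, ?_⟩
  · rw [hpsum _ le_rfl, hsq]
    have : (r + 1) * r = r * r + r := by ring
    omega
  · rintro k ⟨hk1, -, hk⟩
    by_contra! hlt
    rw [hpsum k hlt.le] at hk
    have : k * r ≤ r * r := Nat.mul_le_mul_right r (by omega)
    omega

theorem stmt16_general (r : ℕ) :
    ∃ G₁ G₂ : SimpleGraph (Fin ((r + 1) ^ 2)),
      (∀ i, deg G₁ i = if (i : ℕ) < r + 1 then r else 1) ∧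
      (∀ i, deg G₂ i = if (i : ℕ) < r + 1 then r else 1) ∧
      domNum G₁ = slater ((r + 1) ^ 2) (fun i => if (i : ℕ) < r + 1 then r else 1) ∧
      slater ((r + 1) ^ 2) (fun i => if (i : ℕ) < r + 1 then r else 1) = r + 1 ∧
      domNum G₂ = 1 + r * (r + 1) / 2 := by
  have hn₁ : Fintype.card (Fin (r + 1)) + Fintype.card (Fin (r + 1) × Fin r) = (r + 1) ^ 2 := by
    simp only [Fintype.card_fin, Fintype.card_prod]
    ring
  have hn₂ : Fintype.card (Fin (r + 1)) + Fintype.card (Fin (r * (r + 1) / 2) × Fin 2) =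
      (r + 1) ^ 2 := by
    simp only [Fintype.card_fin, Fintype.card_prod,
      Nat.div_mul_cancel (Nat.even_mul_succ_self r).two_dvd]
    ring
  obtain ⟨G₁, hdeg₁, hdom₁⟩ := exists_fin_relabel (p := r) (q := 1)
    (starForest (Prod.fst : Fin (r + 1) × Fin r → Fin (r + 1))) hn₁
    (fun a => by rw [deg_starForest_inl, Nat.card_subtype_fst_eq, Nat.card_eq_fintype_card,
      Fintype.card_fin])
    (deg_starForest_inr _)
  obtain ⟨G₂, hdeg₂, hdom₂⟩ := exists_fin_relabel (p := r) (q := 1)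
    ((⊤ : SimpleGraph (Fin (r + 1))) ⊕g
      ((⊥ : SimpleGraph (Fin (r * (r + 1) / 2))) □ (⊤ : SimpleGraph (Fin 2)))) hn₂
    (fun a => by simp [deg_top_sum_bot_boxProd_top_inl])
    (fun x => by simp [deg_top_sum_bot_boxProd_top_inr])
  refine ⟨G₁, G₂, by simpa using hdeg₁, by simpa using hdeg₂, ?_,
    slater_starForest_degrees r, ?_⟩
  · rw [hdom₁, domNum_starForest, slater_starForest_degrees, Fintype.card_fin]
  · rw [hdom₂, domNum_top_sum_bot_boxProd_top, Fintype.card_fin, add_comm]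

theorem stmt16 (r : ℕ) (hr : 1 ≤ r) :
    ∃ G₁ G₂ : SimpleGraph (Fin ((r + 1) ^ 2)),
      (∀ i, deg G₁ i = if (i : ℕ) < r + 1 then r else 1) ∧
      (∀ i, deg G₂ i = if (i : ℕ) < r + 1 then r else 1) ∧
      domNum G₁ = slater ((r + 1) ^ 2) (fun i => if (i : ℕ) < r + 1 then r else 1) ∧
      slater ((r + 1) ^ 2) (fun i => if (i : ℕ) < r + 1 then r else 1) = r + 1 ∧
      domNum G₂ = 1 + r * (r + 1) / 2 :=
  stmt16_general r
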